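/- Let q ≥ 1, s ≥ 2, and a ≥ 1 be integers, and let G be a graph with |V(G)| ≥ a·C(a,s)·q + a^s·R(s, ω(G)+1), where C(a,s) denotes the binomial coefficient 'a choose s'. Then either α(G) > a, or G contains a stable set I of size s such that the subgraph of G induced on the common neighbourhood ∩_{v∈I} N_G(v) has chromatic number greater than q. -/

import Mathlib

open SimpleGraph

/-- The chromatic number of a graph as a natural number. -/
noncomputable def chromNum {V : Type*} (G : SimpleGraph V) : ℕ :=
  G.chromaticNumber.toNat

/-- The stability (independence) number of a graph. -/
noncomputable def indepNum {V : Type*} (G : SimpleGraph V) : ℕ := Gᶜ.cliqueNum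

/-- A stable (independent) set in a graph. -/
def IsStableSet {V : Type*} (G : SimpleGraph V) (S : Finset V) : Prop :=
  ∀ u ∈ S, ∀ v ∈ S, ¬ G.Adj u v

/-- The Ramsey number `R(s,w)`: the least `n ≥ 1` such that every graph on `n`
vertices contains a stable set of size `s` or a clique of size `w`. -/
noncomputable def ramsey (s w : ℕ) : ℕ :=
  sInf {n : ℕ | 1 ≤ n ∧ ∀ G : SimpleGraph (Fin n),
    (∃ S : Finset (Fin n), IsStableSet G S ∧ S.card = s) ∨
    (∃ S : Finset (Fin n), G.IsNClique w S)}

/-- `G` has no induced subgraph isomorphic to `H`. -/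
def IndFree {W V : Type*} (H : SimpleGraph W) (G : SimpleGraph V) : Prop :=
  ¬ Nonempty (H ↪g G)

/-!
Suppose `α(G) ≤ a` and every stable `s`-set has a `q`-colourable common neighbourhood, and fix a
maximum stable set `A`. A vertex with at least `s` neighbours in `A` lies in the common
neighbourhood of an `s`-subset of `A`; such a neighbourhood splits into `q` stable sets, so there
are at most `C(a, s) · q · a` of these vertices. The vertices outside `A` with fewer than `s`
neighbours in `A` are grouped by their neighbourhood `S ⊆ A`. A stable `s`-set `I` inside one
group would make `I ∪ (A \ S)` a stable set larger than `A`, so by Ramsey's theorem each group has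
fewer than `R(s, ω(G) + 1)` vertices, and there are fewer than `a ^ s` groups. Adding up
contradicts the bound on `|V(G)|`.
-/

open Finset

namespace SimpleGraph

variable {V : Type*} {G : SimpleGraph V}

/-- The Erdős–Szekeres bound, in the slightly weaker form `R(s, w) ≤ C(s + w, s)`. -/
theorem exists_isNIndepSet_or_isNClique_of_choose_le [DecidableEq V] [DecidableRel G.Adj] :
    ∀ (s w : ℕ) (T : Finset V), (s + w).choose s ≤ #T →
      (∃ S ⊆ T, G.IsNIndepSet s S) ∨ ∃ S ⊆ T, G.IsNClique w S
  | 0, _, _, _ => .inl ⟨∅, empty_subset _, by simp [isNIndepSet_iff]⟩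
  | _ + 1, 0, _, _ => .inr ⟨∅, empty_subset _, by simp⟩
  | s + 1, w + 1, T, hT => by
    obtain ⟨v, hv⟩ : T.Nonempty := card_pos.mp ((Nat.choose_pos (by omega)).trans_le hT)
    set N := {u ∈ T.erase v | G.Adj v u}
    set M := {u ∈ T.erase v | ¬ G.Adj v u}
    have hNM : #N + #M + 1 = #T := by
      rw [card_filter_add_card_filter_not, card_erase_add_one hv]
    have hpascal : (s + 1 + (w + 1)).choose (s + 1)
        = (s + (w + 1)).choose s + (s + 1 + w).choose (s + 1) := by
      rw [show s + 1 + (w + 1) = s + w + 1 + 1 by omega, Nat.choose_succ_succ,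
        show s + (w + 1) = s + w + 1 by omega, show s + 1 + w = s + w + 1 by omega]
    by_cases hM : (s + (w + 1)).choose s ≤ #M
    · rcases exists_isNIndepSet_or_isNClique_of_choose_le s (w + 1) M hM with
        ⟨S, hSM, hS⟩ | ⟨S, hSM, hS⟩
      · refine .inl ⟨insert v S, insert_subset hv fun u hu => mem_of_mem_erase
          (mem_filter.mp (hSM hu)).1, (G.isNClique_compl).mp ?_⟩
        refine ((G.isNClique_compl).mpr hS).insert fun u hu => ?_
        obtain ⟨hu, hvu⟩ := mem_filter.mp (hSM hu)
        exact ⟨(ne_of_mem_erase hu).symm, hvu⟩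
      · exact .inr ⟨S, hSM.trans (filter_subset _ _ |>.trans (erase_subset _ _)), hS⟩
    · rcases exists_isNIndepSet_or_isNClique_of_choose_le (s + 1) w N (by omega) with
        ⟨S, hSN, hS⟩ | ⟨S, hSN, hS⟩
      · exact .inl ⟨S, hSN.trans (filter_subset _ _ |>.trans (erase_subset _ _)), hS⟩
      · refine .inr ⟨insert v S, insert_subset hv fun u hu => mem_of_mem_erase
          (mem_filter.mp (hSN hu)).1, hS.insert fun u hu => (mem_filter.mp (hSN hu)).2⟩

end SimpleGraph

section Ramsey

variable {V : Type*}

lemma isStableSet_iff_isIndepSet {G : SimpleGraph V} {S : Finset V} :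
    IsStableSet G S ↔ G.IsIndepSet (S : Set V) :=
  ⟨fun h _ hu _ hv _ => h _ hu _ hv, fun h _ hu _ hv hadj => h hu hv hadj.ne hadj⟩

lemma ramsey_spec (s w : ℕ) :
    1 ≤ ramsey s w ∧ ∀ G : SimpleGraph (Fin (ramsey s w)),
      (∃ S : Finset (Fin (ramsey s w)), IsStableSet G S ∧ S.card = s) ∨
      (∃ S : Finset (Fin (ramsey s w)), G.IsNClique w S) := by
  classical
  refine Nat.sInf_mem (s := {n | 1 ≤ n ∧ ∀ G : SimpleGraph (Fin n),
      (∃ S, IsStableSet G S ∧ #S = s) ∨ ∃ S, G.IsNClique w S})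
    ⟨(s + w).choose s, Nat.choose_pos (by omega), fun G => ?_⟩
  rcases G.exists_isNIndepSet_or_isNClique_of_choose_le s w univ (by simp) with
    ⟨S, -, hS⟩ | ⟨S, -, hS⟩
  · exact .inl ⟨S, isStableSet_iff_isIndepSet.mpr hS.isIndepSet, hS.card_eq⟩
  · exact .inr ⟨S, hS⟩

lemma one_le_ramsey (s w : ℕ) : 1 ≤ ramsey s w := (ramsey_spec s w).1

theorem exists_isNIndepSet_or_isNClique_of_ramsey_le {s w : ℕ} (G : SimpleGraph V) {T : Finset V}
    (hT : ramsey s w ≤ #T) : (∃ S ⊆ T, G.IsNIndepSet s S) ∨ ∃ S, G.IsNClique w S := by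
  obtain ⟨f⟩ := Function.Embedding.nonempty_of_card_le (α := Fin (ramsey s w)) (β := T)
    (by simpa using hT)
  let g : Fin (ramsey s w) ↪ V := f.trans (Function.Embedding.subtype _)
  rcases (ramsey_spec s w).2 (G.comap g) with ⟨S, hS, hcard⟩ | ⟨S, hS⟩
  · refine .inl ⟨S.map g, fun v hv => ?_, ⟨?_, by rw [card_map, hcard]⟩⟩
    · obtain ⟨x, -, rfl⟩ := mem_map.mp hv
      exact (f x).2
    · rw [← isStableSet_iff_isIndepSet]
      simp only [IsStableSet, mem_map, forall_exists_index, and_imp]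
      rintro _ x hx rfl _ y hy rfl
      exact hS x hx y hy
  · exact .inr ⟨S.map g, (hS.map (f := g)).mono (map_comap_le _ _)⟩

theorem exists_isNIndepSet_of_ramsey_le [Finite V] {s : ℕ} (G : SimpleGraph V) {T : Finset V}
    (hT : ramsey s (G.cliqueNum + 1) ≤ #T) : ∃ S ⊆ T, G.IsNIndepSet s S :=
  (exists_isNIndepSet_or_isNClique_of_ramsey_le G hT).resolve_right fun ⟨S, hS⟩ => by
    have := SimpleGraph.IsClique.card_le_cliqueNum (tc := hS.isClique)
    rw [hS.card_eq] at this
    omega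

end Ramsey

namespace SimpleGraph

variable {V : Type*} {G : SimpleGraph V}

lemma Colorable.natCard_le_mul_indepNum [Finite V] {q : ℕ} (h : G.Colorable q) :
    Nat.card V ≤ q * G.indepNum := by
  classical
  have := Fintype.ofFinite V
  obtain ⟨C⟩ := h
  calc Nat.card V = #(univ : Finset V) := by rw [card_univ, Nat.card_eq_fintype_card]
    _ ≤ G.indepNum * #(univ : Finset (Fin q)) :=
      card_le_mul_card_image_of_maps_to (f := C) (fun _ _ => mem_univ _) _
        fun c _ => IsIndepSet.card_le_indepNum fun x hx y hy _ =>
          C.not_adj_of_mem_colorClass (mem_filter.mp hx).2 (mem_filter.mp hy).2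
    _ = q * G.indepNum := by rw [card_univ, Fintype.card_fin, mul_comm]

lemma indepNum_induce_le [Finite V] (s : Set V) : (G.induce s).indepNum ≤ G.indepNum := by
  obtain ⟨t, ht⟩ := (G.induce s).exists_isNIndepSet_indepNum
  rw [← ht.card_eq, ← card_map (Function.Embedding.subtype _)]
  refine IsIndepSet.card_le_indepNum ?_
  rw [coe_map]
  rintro _ ⟨x, hx, rfl⟩ _ ⟨y, hy, rfl⟩ hne
  exact ht.isIndepSet hx hy fun h => hne (congrArg _ h)

lemma colorable_of_chromNum_le [Finite V] {q : ℕ} (h : chromNum G ≤ q) : G.Colorable q :=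
  G.colorable_chromaticNumber_of_fintype.mono h

lemma ncard_le_mul_indepNum_of_chromNum_induce_le [Finite V] {s : Set V} {q : ℕ}
    (h : chromNum (G.induce s) ≤ q) : s.ncard ≤ q * G.indepNum :=
  calc s.ncard = Nat.card s := (Nat.card_coe_set_eq s).symm
    _ ≤ q * (G.induce s).indepNum := (colorable_of_chromNum_le h).natCard_le_mul_indepNum
    _ ≤ q * G.indepNum := Nat.mul_le_mul_left _ (indepNum_induce_le s)

section MaximumIndepSet

variable [Fintype V] [DecidableRel G.Adj] {A : Finset V}

lemma card_filter_le_choose_mul {s m : ℕ}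
    (hN : ∀ I ⊆ A, #I = s → (⋂ u ∈ I, G.neighborSet u).ncard ≤ m) :
    #{v | s ≤ #{u ∈ A | G.Adj v u}} ≤ (#A).choose s * m :=
  calc #{v | s ≤ #{u ∈ A | G.Adj v u}}
      ≤ (⋃ I ∈ A.powersetCard s, ⋂ u ∈ I, G.neighborSet u).ncard := by
        rw [← Set.ncard_coe_finset]
        refine Set.ncard_le_ncard (fun v hv => ?_) (Set.toFinite _)
        obtain ⟨I, hI, hIcard⟩ := exists_subset_card_eq (mem_filter.mp hv).2
        simp only [Set.mem_iUnion, Set.mem_iInter, mem_neighborSet, mem_powersetCard]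
        exact ⟨I, ⟨hI.trans (filter_subset _ _), hIcard⟩,
          fun u hu => ((mem_filter.mp (hI hu)).2).symm⟩
    _ ≤ ∑ I ∈ A.powersetCard s, (⋂ u ∈ I, G.neighborSet u).ncard :=
        set_ncard_biUnion_le _ _
    _ ≤ #(A.powersetCard s) * m :=
        sum_le_card_nsmul _ _ _ fun I hI => hN I (mem_powersetCard.mp hI).1
          (mem_powersetCard.mp hI).2
    _ = (#A).choose s * m := by rw [card_powersetCard]

variable [DecidableEq V]

lemma IsMaximumIndepSet.card_le_of_neighbors_eq (hA : G.IsMaximumIndepSet A) {S I : Finset V}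
    (hSA : S ⊆ A) (hI : G.IsIndepSet (I : Set V)) (hIA : Disjoint I A)
    (hIS : ∀ v ∈ I, {u ∈ A | G.Adj v u} = S) : #I ≤ #S := by
  have : Std.Symm fun v w => ¬ G.Adj v w := ⟨fun _ _ h hadj => h hadj.symm⟩
  have hunion : G.IsIndepSet ↑(I ∪ (A \ S)) := by
    rw [coe_union, IsIndepSet, Set.pairwise_union_of_symm]
    refine ⟨hI, hA.isIndepSet.mono (coe_subset.mpr sdiff_subset), fun v hv u hu _ hvu => ?_⟩
    obtain ⟨huA, huS⟩ := mem_sdiff.mp hu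
    exact huS (hIS v hv ▸ mem_filter.mpr ⟨huA, hvu⟩)
  have := hA.maximum _ hunion
  rw [card_union_of_disjoint (hIA.mono_right sdiff_subset), card_sdiff_of_subset hSA] at this
  have := card_le_card hSA
  omega

lemma IsMaximumIndepSet.card_filter_lt_le (hA : G.IsMaximumIndepSet A) {s D : ℕ}
    (hD : ∀ T : Finset V, D ≤ #T → ∃ I ⊆ T, G.IsNIndepSet s I) :
    #{v ∈ Aᶜ | #{u ∈ A | G.Adj v u} < s} ≤ (D - 1) * #{S ∈ A.powerset | #S < s} := by
  refine card_le_mul_card_image_of_maps_to (f := fun v => {u ∈ A | G.Adj v u})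
    (s := {v ∈ Aᶜ | #{u ∈ A | G.Adj v u} < s}) (t := {S ∈ A.powerset | #S < s})
    (fun v hv => mem_filter.mpr ⟨mem_powerset.mpr (filter_subset _ _), (mem_filter.mp hv).2⟩)
    _ fun S hS => ?_
  obtain ⟨hSA, hSs⟩ := mem_filter.mp hS
  by_contra! hfiber
  obtain ⟨I, hIF, hI⟩ := hD _ (Nat.le_of_pred_lt hfiber)
  have := hA.card_le_of_neighbors_eq (mem_powerset.mp hSA) hI.isIndepSet
    (Finset.disjoint_left.mpr fun v hv =>
      mem_compl.mp (mem_filter.mp (mem_filter.mp (hIF hv)).1).1)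
    fun v hv => (mem_filter.mp (hIF hv)).2
  exact hSs.not_ge (hI.card_eq ▸ this)

theorem IsMaximumIndepSet.card_le (hA : G.IsMaximumIndepSet A) {s m D : ℕ}
    (hN : ∀ I ⊆ A, #I = s → (⋂ u ∈ I, G.neighborSet u).ncard ≤ m)
    (hD : ∀ T : Finset V, D ≤ #T → ∃ I ⊆ T, G.IsNIndepSet s I) :
    Fintype.card V ≤ (#A).choose s * m + #A + (D - 1) * #{S ∈ A.powerset | #S < s} :=
  calc Fintype.card V
      ≤ #(({v | s ≤ #{u ∈ A | G.Adj v u}} : Finset V) ∪ A ∪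
          {v ∈ Aᶜ | #{u ∈ A | G.Adj v u} < s}) := by
        rw [← card_univ]
        refine card_le_card fun v _ => ?_
        simp only [mem_union, mem_filter, mem_univ, true_and, mem_compl]
        have := le_or_gt s #{u ∈ A | G.Adj v u}
        tauto
    _ ≤ #{v | s ≤ #{u ∈ A | G.Adj v u}} + #A + #{v ∈ Aᶜ | #{u ∈ A | G.Adj v u} < s} :=
        (card_union_le _ _).trans (add_le_add_left (card_union_le _ _) _)
    _ ≤ _ := add_le_add (add_le_add_left (card_filter_le_choose_mul hN) _)
        (hA.card_filter_lt_le hD)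

end MaximumIndepSet

end SimpleGraph

lemma Finset.card_filter_powerset_card_lt_lt_pow {α : Type*} [DecidableEq α] {A : Finset α}
    {a s : ℕ} (ha : 2 ≤ a) (hA : #A ≤ a) : #{S ∈ A.powerset | #S < s} < a ^ s :=
  calc #{S ∈ A.powerset | #S < s} ≤ #((range s).biUnion (A.powersetCard ·)) :=
        card_le_card fun S hS => mem_biUnion.mpr ⟨#S, mem_range.mpr (mem_filter.mp hS).2,
          mem_powersetCard.mpr ⟨mem_powerset.mp (mem_filter.mp hS).1, rfl⟩⟩
    _ ≤ ∑ k ∈ range s, #(A.powersetCard k) := card_biUnion_le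
    _ ≤ ∑ k ∈ range s, a ^ k := sum_le_sum fun k _ => by
        rw [card_powersetCard]
        exact (Nat.choose_le_pow _ _).trans (Nat.pow_le_pow_left hA k)
    _ < a ^ s := Nat.geomSum_lt ha fun _ hk => mem_range.mp hk

theorem stmt19_general (q s a : ℕ) (hs : 2 ≤ s) (ha : 1 ≤ a)
    (V : Type) [Fintype V] (G : SimpleGraph V)
    (hcard : a * Nat.choose a s * q + a ^ s * ramsey s (G.cliqueNum + 1)
      ≤ Fintype.card V) :
    a < _root_.indepNum G ∨
    ∃ I : Finset V, IsStableSet G I ∧ I.card = s ∧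
      q < chromNum (G.induce (⋂ v ∈ I, G.neighborSet v)) := by
  classical
  by_contra! ⟨hα, hχ⟩
  simp only [_root_.indepNum, cliqueNum_compl] at hα
  set D := ramsey s (G.cliqueNum + 1)
  have hD : ∀ T : Finset V, D ≤ #T → ∃ I ⊆ T, G.IsNIndepSet s I :=
    fun _ => exists_isNIndepSet_of_ramsey_le G
  obtain ⟨A, hA⟩ := G.maximumIndepSet_exists
  have hAα : #A = G.indepNum := maximumIndepSet_card_eq_indepNum A hA
  have hN : ∀ I ⊆ A, #I = s → (⋂ u ∈ I, G.neighborSet u).ncard ≤ q * G.indepNum :=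
    fun I hIA hI => ncard_le_mul_indepNum_of_chromNum_induce_le <| hχ I
      (isStableSet_iff_isIndepSet.mpr (hA.isIndepSet.mono (coe_subset.mpr hIA))) hI
  have hsA : s ≤ #A := by
    obtain ⟨I, -, hI⟩ := hD univ <| card_univ (α := V) ▸
      (Nat.le_mul_of_pos_left D (by positivity)).trans ((Nat.le_add_left _ _).trans hcard)
    exact hI.card_eq ▸ hA.maximum I hI.isIndepSet
  have hlow : #A + (D - 1) * #{S ∈ A.powerset | #S < s} < a ^ s * D := by
    have hM := card_filter_powerset_card_lt_lt_pow (s := s) (by omega) (hAα.trans_le hα)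
    have ha_lt : a < a ^ s := by
      simpa using Nat.pow_lt_pow_right (by omega : 1 < a) (by omega : 1 < s)
    obtain ⟨E, hE⟩ : ∃ E, D = E + 1 :=
      ⟨D - 1, by have := one_le_ramsey s (G.cliqueNum + 1); omega⟩
    rw [hE, Nat.add_sub_cancel]
    nlinarith
  have hhigh : (#A).choose s * (q * G.indepNum) ≤ a * a.choose s * q := by
    rw [mul_comm a, mul_assoc, mul_comm a]
    gcongr
    omega
  have := hA.card_le hN hD
  omega

/-- for integers `q ≥ 1`, `s ≥ 2`, `a ≥ 1` and every graph `G`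
with `|V(G)| ≥ a·(a choose s)·q + a^s·R(s, ω(G)+1)`, either `α(G) > a`, or `G`
contains a stable set `I` of size `s` whose common neighbourhood induces a
subgraph of chromatic number greater than `q`. -/
theorem stmt19 (q s a : ℕ) (hq : 1 ≤ q) (hs : 2 ≤ s) (ha : 1 ≤ a)
    (V : Type) [Fintype V] (G : SimpleGraph V)
    (hcard : a * Nat.choose a s * q + a ^ s * ramsey s (G.cliqueNum + 1)
      ≤ Fintype.card V) :
    a < _root_.indepNum G ∨
    ∃ I : Finset V, IsStableSet G I ∧ I.card = s ∧
      q < chromNum (G.induce (⋂ v ∈ I, G.neighborSet v)) :=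
  stmt19_general q s a hs ha V G hcard
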